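/- Let n, r, t be positive integers, s ≥ 2 an integer, and α = ν_2(n). Then in ℤ[q], ∑_{k=-n}^{n} (-1)^k q^{C(k,2)} [8n choose 4n+k]_q^r [4n choose 2n+k]_q^s [2n choose n+k]_q^t is divisible by Φ_{2^{α+2}}(q)^2 = (1 + q^{2^{α+1}})^2. -/

import Mathlib

open Finset Polynomial

/-- The Gaussian (q-)binomial coefficient as a polynomial in `ℤ[q]`,
defined by the q-Pascal recurrence. -/
noncomputable def qbinom : ℕ → ℕ → Polynomial ℤ
  | _, 0 => 1
  | 0, _ + 1 => 0
  | n + 1, k + 1 => qbinom n k + X ^ (k + 1) * qbinom n (k + 1)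

/-- Gaussian binomial with an integer lower argument, zero when it is negative. -/
noncomputable def qbinomZ (n : ℕ) (k : ℤ) : Polynomial ℤ := if 0 ≤ k then qbinom n k.toNat else 0

lemma qbinom_zero (a : ℕ) : qbinom a 0 = 1 := by cases a <;> rfl

lemma qbinom_succ (a b : ℕ) :
    qbinom (a + 1) (b + 1) = qbinom a b + X ^ (b + 1) * qbinom a (b + 1) := rfl

lemma qbinom_eq_zero : ∀ a b : ℕ, a < b → qbinom a b = 0
  | 0, _ + 1, _ => rfl
  | a + 1, b + 1, h => by
      rw [qbinom_succ, qbinom_eq_zero a b (by omega), qbinom_eq_zero a (b+1) (by omega)]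
      simp

lemma qbinom_self : ∀ a : ℕ, qbinom a a = 1
  | 0 => rfl
  | a + 1 => by
      rw [qbinom_succ, qbinom_self a, qbinom_eq_zero a (a+1) (by omega)]
      simp

lemma qbinom_one (m : ℕ) : 1 + X * qbinom m 1 = qbinom m 1 + X ^ m := by
  induction m with
  | zero => simp [qbinom_zero, qbinom_eq_zero 0 1 (by omega)]
  | succ m ih =>
      have h : qbinom (m + 1) 1 = 1 + X * qbinom m 1 := by
        rw [show (1:ℕ) = 0 + 1 from rfl, qbinom_succ, qbinom_zero]; ring
      rw [h]
      calc 1 + X * (1 + X * qbinom m 1) = 1 + X * (qbinom m 1 + X ^ m) := by rw [ih]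
        _ = 1 + X * qbinom m 1 + X ^ (m + 1) := by ring

lemma qbinom_star : ∀ a b : ℕ,
    X ^ b * qbinom (a + 1) (b + 1) = X ^ b * qbinom a (b + 1) + X ^ a * qbinom a b
  | 0, 0 => by simp [qbinom_self, qbinom_eq_zero 0 1 (by omega), qbinom_zero]
  | 0, b + 1 => by
      simp [qbinom_eq_zero 0 (b+1) (by omega), qbinom_eq_zero 0 (b+2) (by omega),
        qbinom_eq_zero 1 (b+2) (by omega)]
  | a + 1, 0 => by
      simp only [pow_zero, one_mul, qbinom_zero]
      rw [show (1:ℕ) = 0 + 1 from rfl, qbinom_succ, qbinom_zero]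
      have := qbinom_one (a + 1)
      calc (1 : Polynomial ℤ) + X ^ (0+1) * qbinom (a+1) (0+1)
          = 1 + X * qbinom (a+1) 1 := by norm_num
        _ = qbinom (a+1) 1 + X ^ (a+1) * 1 := by rw [this]; ring
  | a + 1, b + 1 => by
      have ih1 := qbinom_star a b
      have ih2 := qbinom_star a (b + 1)
      rw [qbinom_succ (a+1) (b+1), qbinom_succ a (b+1), qbinom_succ a b]
      have e1 : X ^ (b+1) * qbinom (a+1) (b+1)
          = X ^ (b+1) * qbinom a (b+1) + X ^ (a+1) * qbinom a b := by
        calc X ^ (b+1) * qbinom (a+1) (b+1) = X * (X ^ b * qbinom (a+1) (b+1)) := by ring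
          _ = X * (X ^ b * qbinom a (b+1) + X ^ a * qbinom a b) := by rw [ih1]
          _ = X ^ (b+1) * qbinom a (b+1) + X ^ (a+1) * qbinom a b := by ring
      have e2 : X ^ (b+1) * (X ^ (b+2) * qbinom (a+1) (b+2))
          = X ^ (b+1) * (X ^ (b+2) * qbinom a (b+2)) + X ^ (b+2) * (X ^ a * qbinom a (b+1)) := by
        calc X ^ (b+1) * (X ^ (b+2) * qbinom (a+1) (b+2))
            = X ^ (b+2) * (X ^ (b+1) * qbinom (a+1) (b+2)) := by ring
          _ = X ^ (b+2) * (X ^ (b+1) * qbinom a (b+2) + X ^ a * qbinom a (b+1)) := by rw [ih2]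
          _ = _ := by ring
      calc X ^ (b+1) * (qbinom (a+1) (b+1) + X ^ (b+2) * qbinom (a+1) (b+2))
          = X ^ (b+1) * qbinom (a+1) (b+1) + X ^ (b+1) * (X ^ (b+2) * qbinom (a+1) (b+2)) := by ring
        _ = (X ^ (b+1) * qbinom a (b+1) + X ^ (a+1) * qbinom a b)
            + (X ^ (b+1) * (X ^ (b+2) * qbinom a (b+2)) + X ^ (b+2) * (X ^ a * qbinom a (b+1))) := by
            rw [e1, e2]
        _ = _ := by ring

lemma qbinom_pascal2 (a b : ℕ) (h : b ≤ a) :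
    qbinom (a + 1) (b + 1) = qbinom a (b + 1) + X ^ (a - b) * qbinom a b := by
  have hX : (X : Polynomial ℤ) ^ b ≠ 0 := pow_ne_zero _ X_ne_zero
  apply mul_left_cancel₀ hX
  rw [qbinom_star a b]
  have : (X : Polynomial ℤ) ^ b * (X ^ (a - b) * qbinom a b) = X ^ a * qbinom a b := by
    rw [← mul_assoc, ← pow_add]
    congr 2
    omega
  rw [mul_add, this]

lemma qbinom_symm : ∀ a b : ℕ, b ≤ a → qbinom a b = qbinom a (a - b)
  | 0, 0, _ => rfl
  | a + 1, 0, _ => by simp [qbinom_zero, qbinom_self]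
  | a + 1, b + 1, h => by
      rcases eq_or_lt_of_le h with he | hlt
      · rw [← he]; simp [qbinom_self, qbinom_zero]
      · have hb : b + 1 ≤ a := by omega
        have hba : b ≤ a := by omega
        have h1 : a + 1 - (b + 1) = (a - 1 - b) + 1 := by omega
        rw [qbinom_succ, h1, qbinom_pascal2 a (a - 1 - b) (by omega)]
        have e1 : a - (a - 1 - b) = b + 1 := by omega
        have e2 : a - (a - 1 - b + 1) = b := by omega
        rw [e1]
        have s1 : qbinom a b = qbinom a (a - b) := qbinom_symm a b hba
        have s2 : qbinom a (b + 1) = qbinom a (a - (b + 1)) := qbinom_symm a (b + 1) hb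
        have e3 : a - b = a - 1 - b + 1 := by omega
        have e4 : a - (b + 1) = a - 1 - b := by omega
        rw [s1, s2, e3, e4]

lemma coeff_mul_one_add_C_mul_X {R : Type*} [CommRing R] (p : R[X]) (c : R) :
    ∀ b : ℕ, (p * (1 + C c * X)).coeff b
      = p.coeff b + c * (if b = 0 then 0 else p.coeff (b - 1)) := by
  intro b
  have : p * (1 + C c * X) = p + C c * (p * X) := by ring
  rw [this, coeff_add, coeff_C_mul]
  cases b with
  | zero => simp
  | succ b => simp [coeff_mul_X]

lemma qbinom_gen : ∀ a b : ℕ,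
    ((range a).prod fun i => (1 + C ((X : Polynomial ℤ) ^ i) * X : (Polynomial ℤ)[X])).coeff b
      = X ^ (b.choose 2) * qbinom a b := by
  intro a
  induction a with
  | zero =>
      intro b
      cases b with
      | zero => simp [qbinom_zero]
      | succ b => simp [qbinom_eq_zero 0 (b+1) (by omega), coeff_one]
  | succ a ih =>
      intro b
      rw [prod_range_succ, coeff_mul_one_add_C_mul_X]
      cases b with
      | zero =>
          rw [if_pos rfl, mul_zero, add_zero, ih 0, qbinom_zero, qbinom_zero]
      | succ b =>
          rw [if_neg (Nat.succ_ne_zero b), Nat.add_sub_cancel, ih (b+1), ih b]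
          have hc : (b + 1).choose 2 = b.choose 2 + b := by
            rw [Nat.choose_succ_succ b 1, Nat.choose_one_right, Nat.add_comm]
          rw [hc, pow_add]
          symm
          calc X ^ b.choose 2 * X ^ b * qbinom (a+1) (b+1)
              = X ^ b.choose 2 * (X ^ b * qbinom (a+1) (b+1)) := by ring
            _ = X ^ b.choose 2 * (X ^ b * qbinom a (b+1) + X ^ a * qbinom a b) := by
                rw [qbinom_star]
            _ = X ^ b.choose 2 * X ^ b * qbinom a (b+1)
                + X ^ a * (X ^ b.choose 2 * qbinom a b) := by ring

lemma prod_two_pow_root {T : Type*} [CommRing T] :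
    ∀ (m : ℕ) (ζ y : T), ζ ^ (2 ^ m) = -1 →
      (∏ i ∈ range (2 ^ (m + 1)), (1 - ζ ^ i * y)) = 1 - y ^ (2 ^ (m + 1)) := by
  intro m
  induction m with
  | zero =>
      intro ζ y h
      simp only [pow_zero, pow_one] at h
      subst h
      rw [show (2:ℕ) ^ (0+1) = 2 by norm_num, prod_range_succ, prod_range_one]
      ring
  | succ m ih =>
      intro ζ y h
      have h2 : 2 ^ (m + 1 + 1) = 2 ^ (m + 1) + 2 ^ (m + 1) := by ring
      rw [h2, prod_range_add, ← prod_mul_distrib]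
      have key : ∀ i ∈ range (2 ^ (m + 1)),
          (1 - ζ ^ i * y) * (1 - ζ ^ (2 ^ (m + 1) + i) * y)
            = 1 - (ζ ^ 2) ^ i * y ^ 2 := by
        intro i _
        have : ζ ^ (2 ^ (m + 1) + i) = -ζ ^ i := by
          rw [pow_add, h]; ring
        rw [this]
        ring
      rw [prod_congr rfl key]
      have hζ2 : (ζ ^ 2) ^ (2 ^ m) = -1 := by
        rw [← pow_mul]
        rw [show 2 * 2 ^ m = 2 ^ (m + 1) by ring]
        exact h
      have := ih (ζ ^ 2) (y ^ 2) hζ2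
      rw [this, ← pow_mul]
      congr 1
      ring

lemma add_one_dvd_odd_pow_add_one {T : Type*} [CommRing T] (y : T) :
    ∀ j : ℕ, (y + 1) ∣ y ^ (2 * j + 1) + 1 := by
  intro j
  induction j with
  | zero => simp
  | succ j ih =>
      have : y ^ (2 * (j + 1) + 1) + 1
          = y ^ 2 * (y ^ (2 * j + 1) + 1) - (y + 1) * (y - 1) := by ring
      rw [this]
      exact dvd_sub (Dvd.dvd.mul_left ih _) (Dvd.dvd.mul_right dvd_rfl _)

lemma prod_block {T : Type*} [CommRing T] (ω : T) (m : ℕ)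
    (hωD : ω ^ (2 ^ (m + 1)) = -1) (c : ℕ) :
    ((range (2 ^ (m + 2) * c)).prod fun i => (1 + C (ω ^ i) * X : T[X]))
      = (1 - X ^ (2 ^ (m + 2))) ^ c := by
  have hωN : ω ^ (2 ^ (m + 2)) = 1 := by
    rw [show (2:ℕ) ^ (m + 2) = 2 ^ (m + 1) * 2 by ring, pow_mul, hωD]; ring
  induction c with
  | zero => simp
  | succ c ih =>
      rw [Nat.mul_succ, prod_range_add, ih, pow_succ ((1 : T[X]) - X ^ (2 ^ (m+2))) c]
      congr 1
      have hcongr : ∀ i ∈ range (2 ^ (m + 2)),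
          (1 + C (ω ^ (2 ^ (m + 2) * c + i)) * X : T[X]) = 1 - (C ω) ^ i * (-X) := by
        intro i _
        rw [pow_add, pow_mul, hωN, one_pow, one_mul, ← map_pow]
        ring
      rw [prod_congr rfl hcongr]
      have hCω : (C ω : T[X]) ^ (2 ^ (m + 1)) = -1 := by
        rw [← map_pow, hωD, map_neg, map_one]
      have := prod_two_pow_root (m + 1) (C ω : T[X]) (-X) hCω
      rw [show m + 1 + 1 = m + 2 from rfl] at this
      rw [this, Even.neg_pow ⟨2 ^ (m + 1), by ring⟩]

lemma coeff_one_sub_X_pow {T : Type*} [CommRing T] (Nn c b : ℕ) (hN : 0 < Nn)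
    (hb : ¬ Nn ∣ b) : (((1 - X ^ Nn : T[X])) ^ c).coeff b = 0 := by
  have : ((1 - X ^ Nn : T[X])) ^ c = Polynomial.expand T Nn ((1 - X) ^ c) := by
    rw [map_pow, map_sub, map_one, Polynomial.expand_X]
  rw [this, Polynomial.coeff_expand hN, if_neg hb]

lemma phi_dvd_qbinom (m a b : ℕ) (ha : 2 ^ (m + 2) ∣ a) (hb : ¬ 2 ^ (m + 2) ∣ b) :
    ((X : Polynomial ℤ) ^ (2 ^ (m + 1)) + 1) ∣ qbinom a b := by
  set D := 2 ^ (m + 1) with hD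
  set N := 2 ^ (m + 2) with hN
  set Φ : Polynomial ℤ := X ^ D + 1 with hΦ
  set I := Ideal.span {Φ} with hI
  let π := Ideal.Quotient.mk I
  set ω : Polynomial ℤ ⧸ I := π X with hω
  have hΦ0 : π Φ = 0 := Ideal.Quotient.eq_zero_iff_mem.mpr (Ideal.subset_span rfl)
  have hωD : ω ^ D = -1 := by
    have h1 : ω ^ D + 1 = 0 := by
      rw [hω, ← map_pow]
      simpa [Φ, map_add, map_one] using hΦ0
    linear_combination h1
  have hωN : ω ^ N = 1 := by
    rw [show N = D * 2 by rw [hD, hN]; ring, pow_mul, hωD]; ring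
  obtain ⟨c, rfl⟩ := ha
  -- map the generating identity
  have hmap : Polynomial.map π ((range (N * c)).prod fun i => (1 + C ((X : Polynomial ℤ) ^ i) * X))
      = (range (N * c)).prod fun i => (1 + C (ω ^ i) * X) := by
    rw [Polynomial.map_prod]
    refine prod_congr rfl fun i _ => ?_
    rw [Polynomial.map_add, Polynomial.map_one, Polynomial.map_mul, Polynomial.map_C,
      map_pow, Polynomial.map_X]
  have hcoeff : ω ^ (b.choose 2) * π (qbinom (N * c) b) = 0 := by
    have h1 : (Polynomial.map π ((range (N * c)).prod fun i =>
        (1 + C ((X : Polynomial ℤ) ^ i) * X))).coeff b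
        = ω ^ (b.choose 2) * π (qbinom (N * c) b) := by
      rw [Polynomial.coeff_map, qbinom_gen, map_mul, map_pow]
    rw [← h1, hmap, prod_block ω m hωD c, coeff_one_sub_X_pow N c b (Nat.two_pow_pos (m + 2)) hb]
  have hzero : π (qbinom (N * c) b) = 0 := by
    set e := b.choose 2
    have hNe : e * (N - 1) + e = e * N := by
      have h2 : e ≤ e * N := Nat.le_mul_of_pos_right e (Nat.two_pow_pos (m + 2))
      rw [Nat.mul_sub_one, Nat.sub_add_cancel h2]
    calc π (qbinom (N * c) b)
        = ω ^ (e * (N - 1)) * (ω ^ e * π (qbinom (N * c) b)) := by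
          rw [← mul_assoc, ← pow_add, hNe, pow_mul', hωN, one_pow, one_mul]
      _ = 0 := by rw [hcoeff, mul_zero]
  have hmem : qbinom (N * c) b ∈ I := Ideal.Quotient.eq_zero_iff_mem.mp hzero
  exact Ideal.mem_span_singleton.mp hmem

lemma cyclotomic_two_pow (m : ℕ) :
    cyclotomic (2 ^ (m + 2)) ℤ = X ^ (2 ^ (m + 1)) + 1 := by
  rw [show m + 2 = (m + 1) + 1 from rfl, cyclotomic_prime_pow_eq_geom_sum Nat.prime_two]
  rw [Finset.sum_range_succ, Finset.sum_range_one, pow_zero, pow_one, add_comm]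


lemma qbinomZ_eq (m : ℕ) (k : ℤ) (K : ℕ) (h : k = (K : ℤ)) : qbinomZ m k = qbinom m K := by
  subst h
  rw [qbinomZ, if_pos (Int.natCast_nonneg K), Int.toNat_natCast]

lemma exp_pos (K : ℕ) (hK : 1 ≤ K) :
    (((K : ℤ)) * ((K : ℤ) - 1) / 2).toNat = K * (K - 1) / 2 := by
  obtain ⟨K', rfl⟩ : ∃ K', K = K' + 1 := ⟨K - 1, by omega⟩
  have e1 : ((K' + 1 : ℕ) : ℤ) * (((K' + 1 : ℕ) : ℤ) - 1) = ((K' * (K' + 1) : ℕ) : ℤ) := by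
    push_cast; ring
  have hb : (K' + 1) * (K' + 1 - 1) = K' * (K' + 1) := by
    rw [Nat.add_sub_cancel]; ring
  rw [e1, hb]
  generalize K' * (K' + 1) = A
  omega

lemma exp_neg (K : ℕ) (hK : 1 ≤ K) :
    ((-(K : ℤ)) * (-(K : ℤ) - 1) / 2).toNat = K * (K - 1) / 2 + K := by
  obtain ⟨K', rfl⟩ : ∃ K', K = K' + 1 := ⟨K - 1, by omega⟩
  have e1 : (-((K' + 1 : ℕ) : ℤ)) * (-((K' + 1 : ℕ) : ℤ) - 1)
      = (((K' + 1) * (K' + 2) : ℕ) : ℤ) := by push_cast; ring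
  have h2 : 2 ∣ K' * (K' + 1) := (Nat.even_mul_succ_self K').two_dvd
  have ha : (K' + 1) * (K' + 2) = K' * (K' + 1) + 2 * (K' + 1) := by ring
  have hb : (K' + 1) * (K' + 1 - 1) = K' * (K' + 1) := by rw [Nat.add_sub_cancel]; ring
  rw [e1, ha, hb]
  generalize K' * (K' + 1) = A at h2 ⊢
  omega

theorem stmt18 (n r s t : ℕ) (hn : 0 < n) (hr : 0 < r) (hs : 2 ≤ s) (ht : 0 < t) :
    Polynomial.cyclotomic (2 ^ (padicValNat 2 n + 2)) ℤ ^ 2 ∣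
      ∑ k ∈ Finset.Icc (-(n : ℤ)) (n : ℤ),
        Polynomial.C (k.negOnePow : ℤ) * X ^ (k * (k - 1) / 2).toNat *
          qbinomZ (8 * n) (4 * (n : ℤ) + k) ^ r *
          qbinomZ (4 * n) (2 * (n : ℤ) + k) ^ s *
          qbinomZ (2 * n) ((n : ℤ) + k) ^ t := by
  set α := padicValNat 2 n with hα
  set D := 2 ^ (α + 1) with hD
  set N := 2 ^ (α + 2) with hN
  rw [cyclotomic_two_pow α]
  set Φ : Polynomial ℤ := X ^ D + 1 with hΦdef
  set T : ℤ → Polynomial ℤ := fun k =>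
    Polynomial.C (k.negOnePow : ℤ) * X ^ (k * (k - 1) / 2).toNat *
      qbinomZ (8 * n) (4 * (n : ℤ) + k) ^ r *
      qbinomZ (4 * n) (2 * (n : ℤ) + k) ^ s *
      qbinomZ (2 * n) ((n : ℤ) + k) ^ t with hT
  -- arithmetic facts
  have hnne : n ≠ 0 := hn.ne'
  obtain ⟨w, hw⟩ : 2 ^ α ∣ n := pow_padicValNat_dvd
  have hα4 : N ∣ 4 * n := ⟨w, by rw [hN, hw]; ring⟩
  have hα8 : N ∣ 8 * n := ⟨2 * w, by rw [hN, hw]; ring⟩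
  have hD2n : D ∣ 2 * n := ⟨w, by rw [hD, hw]; ring⟩
  have hα2 : ¬ N ∣ 2 * n := by
    intro hdvd
    obtain ⟨v, hv⟩ := hdvd
    have h1 : 2 ^ (α + 1) ∣ n := ⟨v, by
      have : 2 * n = 2 * (2 ^ (α + 1) * v) := by rw [hv, hN]; ring
      omega⟩
    exact pow_succ_padicValNat_not_dvd hnne h1
  -- split the sum
  have hsplit : Finset.Icc (-(n : ℤ)) (n : ℤ)
      = Finset.Icc (-(n : ℤ)) (-1) ∪ Finset.Icc (0 : ℤ) (n : ℤ) := by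
    ext x; simp only [Finset.mem_Icc, Finset.mem_union]; omega
  have hdisj : Disjoint (Finset.Icc (-(n : ℤ)) (-1)) (Finset.Icc (0 : ℤ) (n : ℤ)) := by
    rw [Finset.disjoint_left]
    intro x hx hx'
    simp only [Finset.mem_Icc] at hx hx'
    omega
  have himg : Finset.Icc (-(n : ℤ)) (-1) = (Finset.Icc (1 : ℤ) (n : ℤ)).image (fun k => -k) := by
    ext x
    simp only [Finset.mem_Icc, Finset.mem_image]
    constructor
    · intro h; exact ⟨-x, by omega, by omega⟩
    · rintro ⟨y, hy, rfl⟩; omega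
  have h0ins : Finset.Icc (0 : ℤ) (n : ℤ) = insert 0 (Finset.Icc (1 : ℤ) (n : ℤ)) := by
    ext x; simp only [Finset.mem_Icc, Finset.mem_insert]; omega
  rw [hsplit, Finset.sum_union hdisj, himg,
    Finset.sum_image (by intro a _ b _ h; exact neg_inj.mp h), h0ins,
    Finset.sum_insert (by simp)]
  have hre : ∑ k ∈ Finset.Icc (1 : ℤ) (n : ℤ), T (-k)
      + (T 0 + ∑ k ∈ Finset.Icc (1 : ℤ) (n : ℤ), T k)
      = T 0 + ∑ k ∈ Finset.Icc (1 : ℤ) (n : ℤ), (T k + T (-k)) := by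
    rw [Finset.sum_add_distrib]; ring
  rw [hre]
  apply dvd_add
  · -- T 0
    have hB : Φ ∣ qbinom (4 * n) (2 * n) := phi_dvd_qbinom α (4 * n) (2 * n) hα4 hα2
    have hBs : Φ ^ 2 ∣ qbinom (4 * n) (2 * n) ^ s :=
      (pow_dvd_pow Φ hs).trans (pow_dvd_pow_of_dvd hB s)
    have e1 : qbinomZ (4 * n) (2 * (n : ℤ) + 0) = qbinom (4 * n) (2 * n) :=
      qbinomZ_eq _ _ _ (by push_cast; ring)
    rw [hT]
    simp only []
    rw [e1]
    exact dvd_mul_of_dvd_left (dvd_mul_of_dvd_right hBs _) _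
  · apply Finset.dvd_sum
    intro k hk
    simp only [Finset.mem_Icc] at hk
    set K := k.toNat with hKdef
    have hkK : k = (K : ℤ) := by omega
    have hK1 : 1 ≤ K := by omega
    have hKn : K ≤ n := by omega
    -- rewrite all qbinomZ and exponents
    have eA : qbinomZ (8 * n) (4 * (n : ℤ) + k) = qbinom (8 * n) (4 * n + K) :=
      qbinomZ_eq _ _ _ (by rw [hkK]; push_cast; ring)
    have eB : qbinomZ (4 * n) (2 * (n : ℤ) + k) = qbinom (4 * n) (2 * n + K) :=
      qbinomZ_eq _ _ _ (by rw [hkK]; push_cast; ring)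
    have eC : qbinomZ (2 * n) ((n : ℤ) + k) = qbinom (2 * n) (n + K) :=
      qbinomZ_eq _ _ _ (by rw [hkK]; push_cast; ring)
    have eA' : qbinomZ (8 * n) (4 * (n : ℤ) + -k) = qbinom (8 * n) (4 * n - K) :=
      qbinomZ_eq _ _ _ (by rw [hkK, Nat.cast_sub (by omega)]; push_cast; ring)
    have eB' : qbinomZ (4 * n) (2 * (n : ℤ) + -k) = qbinom (4 * n) (2 * n - K) :=
      qbinomZ_eq _ _ _ (by rw [hkK, Nat.cast_sub (by omega)]; push_cast; ring)
    have eC' : qbinomZ (2 * n) ((n : ℤ) + -k) = qbinom (2 * n) (n - K) :=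
      qbinomZ_eq _ _ _ (by rw [hkK, Nat.cast_sub (by omega)]; push_cast; ring)
    have eE : (k * (k - 1) / 2).toNat = K * (K - 1) / 2 := by
      rw [hkK]; exact exp_pos K hK1
    have eE' : ((-k) * (-k - 1) / 2).toNat = K * (K - 1) / 2 + K := by
      rw [hkK]; exact exp_neg K hK1
    have eSign : ((-k).negOnePow : ℤ) = (k.negOnePow : ℤ) := by
      rw [Int.negOnePow_neg]
    rw [hT]
    simp only []
    rw [eA, eB, eC, eA', eB', eC', eE, eE', eSign]
    by_cases hc : N ∣ (2 * n + K)
    · -- bad case : pair up, use A-factor and (1 + X^K)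
      have hDK : D ∣ K := by
        have hDN : D ∣ N := ⟨2, by rw [hN, hD]; ring⟩
        have h1 : D ∣ 2 * n + K := hDN.trans hc
        have := Nat.dvd_sub h1 hD2n
        rwa [Nat.add_sub_cancel_left] at this
      obtain ⟨u, hu⟩ := hDK
      have hNnotK : ¬ N ∣ K := by
        intro h
        have h2 := Nat.dvd_sub hc h
        rw [Nat.add_sub_cancel] at h2
        exact hα2 h2
      have huodd : ¬ 2 ∣ u := by
        intro ⟨v, hv⟩
        exact hNnotK ⟨v, by rw [hu, hv, hN, hD]; ring⟩
      obtain ⟨j, hj⟩ : ∃ j, u = 2 * j + 1 := ⟨u / 2, by omega⟩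
      have hXK : Φ ∣ (1 + X ^ K : Polynomial ℤ) := by
        have h1 := add_one_dvd_odd_pow_add_one ((X : Polynomial ℤ) ^ D) j
        rw [← pow_mul, show D * (2 * j + 1) = K by rw [hu, hj]] at h1
        rwa [add_comm 1 ((X : Polynomial ℤ) ^ K)]
      have hNK4 : ¬ N ∣ (4 * n + K) := by
        intro h
        have h2 := Nat.dvd_sub h hα4
        rw [Nat.add_sub_cancel_left] at h2
        exact hNnotK h2
      have hA1 : Φ ∣ qbinom (8 * n) (4 * n + K) := phi_dvd_qbinom α _ _ hα8 hNK4
      have hsymA : qbinom (8 * n) (4 * n - K) = qbinom (8 * n) (4 * n + K) := by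
        rw [qbinom_symm (8 * n) (4 * n + K) (by omega)]
        congr 1; omega
      have hsymB : qbinom (4 * n) (2 * n - K) = qbinom (4 * n) (2 * n + K) := by
        rw [qbinom_symm (4 * n) (2 * n + K) (by omega)]
        congr 1; omega
      have hsymC : qbinom (2 * n) (n - K) = qbinom (2 * n) (n + K) := by
        rw [qbinom_symm (2 * n) (n + K) (by omega)]
        congr 1; omega
      rw [hsymA, hsymB, hsymC]
      have halg : Polynomial.C (k.negOnePow : ℤ) * X ^ (K * (K - 1) / 2) * qbinom (8*n) (4*n+K) ^ r
            * qbinom (4*n) (2*n+K) ^ s * qbinom (2*n) (n+K) ^ t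
          + Polynomial.C (k.negOnePow : ℤ) * X ^ (K * (K - 1) / 2 + K) * qbinom (8*n) (4*n+K) ^ r
            * qbinom (4*n) (2*n+K) ^ s * qbinom (2*n) (n+K) ^ t
          = (qbinom (8*n) (4*n+K) ^ r * (1 + X ^ K))
            * (Polynomial.C (k.negOnePow : ℤ) * X ^ (K * (K - 1) / 2)
                * qbinom (4*n) (2*n+K) ^ s * qbinom (2*n) (n+K) ^ t) := by
        rw [pow_add]; ring
      rw [halg]
      exact dvd_mul_of_dvd_left
        (by rw [pow_two]; exact mul_dvd_mul (dvd_pow hA1 hr.ne') hXK) _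
    · -- good case : middle factor gives Φ² in each term
      have hc' : ¬ N ∣ (2 * n - K) := by
        intro h
        have h2 := Nat.dvd_sub hα4 h
        rw [show 4 * n - (2 * n - K) = 2 * n + K by omega] at h2
        exact hc h2
      have hB1 : Φ ∣ qbinom (4 * n) (2 * n + K) := phi_dvd_qbinom α _ _ hα4 hc
      have hB2 : Φ ∣ qbinom (4 * n) (2 * n - K) := phi_dvd_qbinom α _ _ hα4 hc'
      apply dvd_add
      · exact dvd_mul_of_dvd_left (dvd_mul_of_dvd_right
          ((pow_dvd_pow Φ hs).trans (pow_dvd_pow_of_dvd hB1 s)) _) _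
      · exact dvd_mul_of_dvd_left (dvd_mul_of_dvd_right
          ((pow_dvd_pow Φ hs).trans (pow_dvd_pow_of_dvd hB2 s)) _) _
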